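/- arXiv:2203.05030 — 2 statements merged into one kernel-verified Lean document; each statement's English description precedes it below -/
import Mathlib

section
/- For every function F holomorphic on the open unit disk 𝔻, every compact set K ⊆ 𝔻, and every ε > 0, there exist an integer n ≥ 2 and complex coefficients c_2, …, c_n such that sup_{z ∈ K} |F(z) − Σ_{k=2}^{n} c_k h_k(z)| < ε; that is, the span of {h_k : k ≥ 2} is dense in the space of holomorphic functions on 𝔻 with the compact-open topology. -/
open Complex

noncomputable section

/-- `g_k(z) = Log(1 - z^k) - Log(1 - z) - log k`. -/
def gFun (k : ℕ) (z : ℂ) : ℂ :=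
  Complex.log (1 - z ^ k) - Complex.log (1 - z) - (Real.log k : ℂ)

/-- `h_k(z) = g_k(z) / (1 - z)`. -/
def hFun (k : ℕ) (z : ℂ) : ℂ := gFun k z / (1 - z)

/-!
Let `gClosure K` be the closure of `span {g_k : k ≥ 2}` for uniform convergence on `K`; it is a
subspace. Since `g_k + log k = log (1 - z^k) - log (1 - z)` stays bounded on `K` while
`log k → ∞`, it contains the constants; since `log (1 - z^j) → 0` uniformly on `K`, it contains
`log (1 - z) = lim (-g_j - log j)` and hence every `log (1 - z^j) = g_j + log (1 - z) + log j`.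
Möbius inversion of `-log (1 - w^k) = ∑ₘ w^(km) / m` gives `w = -∑ₖ μ(k)/k · log (1 - w^k)`, so
it contains every monomial, hence by Taylor expansion every function holomorphic on the disk.
Finally `F - ∑ c_k h_k = ((1 - z) F - ∑ c_k g_k) / (1 - z)` and `‖1 - z‖` is bounded below on `K`.
-/

open Filter Finset Metric Topology
open scoped ArithmeticFunction.Moebius

namespace Submodule

variable {α 𝕜 E : Type*} [NormedField 𝕜] [SeminormedAddCommGroup E] [NormedSpace 𝕜 E]

def uniformClosureOn (S : Submodule 𝕜 (α → E)) (K : Set α) : Submodule 𝕜 (α → E) where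
  carrier := {f | ∀ ε > 0, ∃ g ∈ S, ∀ x ∈ K, ‖f x - g x‖ < ε}
  add_mem' {f₁ f₂} h₁ h₂ ε hε := by
    obtain ⟨g₁, hg₁S, hg₁⟩ := h₁ (ε / 2) (half_pos hε)
    obtain ⟨g₂, hg₂S, hg₂⟩ := h₂ (ε / 2) (half_pos hε)
    refine ⟨g₁ + g₂, S.add_mem hg₁S hg₂S, fun x hx => ?_⟩
    calc ‖(f₁ + f₂) x - (g₁ + g₂) x‖ = ‖(f₁ x - g₁ x) + (f₂ x - g₂ x)‖ := by
          rw [Pi.add_apply, Pi.add_apply, add_sub_add_comm]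
      _ ≤ ‖f₁ x - g₁ x‖ + ‖f₂ x - g₂ x‖ := norm_add_le _ _
      _ < ε / 2 + ε / 2 := add_lt_add (hg₁ x hx) (hg₂ x hx)
      _ = ε := add_halves ε
  zero_mem' ε hε := ⟨0, S.zero_mem, fun x _ => by simpa using hε⟩
  smul_mem' a f hf ε hε := by
    obtain ⟨g, hgS, hg⟩ := hf (ε / (‖a‖ + 1)) (by positivity)
    refine ⟨a • g, S.smul_mem a hgS, fun x hx => ?_⟩
    calc ‖(a • f) x - (a • g) x‖ = ‖a‖ * ‖f x - g x‖ := by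
          rw [Pi.smul_apply, Pi.smul_apply, ← smul_sub, norm_smul]
      _ ≤ ‖a‖ * (ε / (‖a‖ + 1)) := by gcongr; exact (hg x hx).le
      _ < ε := by
          rw [mul_div_assoc', div_lt_iff₀ (by positivity)]
          nlinarith [norm_nonneg a]

variable {S : Submodule 𝕜 (α → E)} {K : Set α} {f : α → E}

theorem le_uniformClosureOn : S ≤ S.uniformClosureOn K :=
  fun f hf _ hε => ⟨f, hf, fun x _ => by simpa using hε⟩

theorem mem_uniformClosureOn_of_tendstoUniformlyOn {ι : Type*} {l : Filter ι} [l.NeBot]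
    {F : ι → α → E} (hF : ∀ᶠ i in l, F i ∈ S.uniformClosureOn K)
    (h : TendstoUniformlyOn F f l K) : f ∈ S.uniformClosureOn K := by
  intro ε hε
  obtain ⟨i, hiS, hi⟩ :=
    (hF.and (Metric.tendstoUniformlyOn_iff.mp h (ε / 2) (half_pos hε))).exists
  obtain ⟨g, hgS, hg⟩ := hiS (ε / 2) (half_pos hε)
  refine ⟨g, hgS, fun x hx => ?_⟩
  calc ‖f x - g x‖ ≤ ‖f x - F i x‖ + ‖F i x - g x‖ := norm_sub_le_norm_sub_add_norm_sub _ _ _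
    _ < ε / 2 + ε / 2 := add_lt_add (by simpa only [dist_eq_norm] using hi x hx) (hg x hx)
    _ = ε := add_halves ε

theorem exists_sum_Icc_eq_of_mem_span_image_Ici {R M : Type*} [Semiring R] [AddCommMonoid M]
    [Module R M] {v : ℕ → M} {m : ℕ} {x : M} (hx : x ∈ span R (v '' Set.Ici m)) :
    ∃ n, m ≤ n ∧ ∃ c : ℕ → R, ∑ k ∈ Icc m n, c k • v k = x := by
  obtain ⟨l, hl, rfl⟩ := (Finsupp.mem_span_image_iff_linearCombination R).mp hx
  refine ⟨max m (l.support.sup id), le_max_left _ _, l, ?_⟩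
  rw [Finsupp.linearCombination_apply]
  refine (Finsupp.sum_of_support_subset l (fun k hk => ?_) (fun k a => a • v k)
    fun _ _ => zero_smul R _).symm
  exact mem_Icc.mpr ⟨hl hk, (le_sup (f := id) hk).trans (le_max_right _ _)⟩

end Submodule

theorem tendstoUniformlyOn_of_norm_sub_le {ι α E : Type*} [SeminormedAddCommGroup E]
    {l : Filter ι} {F : ι → α → E} {f : α → E} {K : Set α} {b : ι → ℝ}
    (hb : Tendsto b l (𝓝 0)) (h : ∀ᶠ i in l, ∀ x ∈ K, ‖f x - F i x‖ ≤ b i) :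
    TendstoUniformlyOn F f l K := by
  refine Metric.tendstoUniformlyOn_iff.mpr fun ε hε => ?_
  filter_upwards [h, hb.eventually (gt_mem_nhds hε)] with i hi hbi x hx
  exact (dist_eq_norm (f x) (F i x)).trans_le (hi x hx) |>.trans_lt hbi

theorem sum_moebius_Icc_dvd_of_le {M j : ℕ} (hj : j ≠ 0) (hjM : j ≤ M) :
    ∑ k ∈ Icc 1 M with k ∣ j, μ k = if j = 1 then 1 else 0 := by
  have hdiv : {k ∈ Icc 1 M | k ∣ j} = j.divisors := by
    ext k
    simp only [mem_filter, mem_Icc, Nat.mem_divisors]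
    constructor
    · rintro ⟨-, hk⟩; exact ⟨hk, hj⟩
    · rintro ⟨hk, -⟩
      have := Nat.le_of_dvd (Nat.pos_of_ne_zero hj) hk
      exact ⟨⟨Nat.pos_of_dvd_of_pos hk (Nat.pos_of_ne_zero hj), by omega⟩, hk⟩
  rw [hdiv, ← ArithmeticFunction.coe_mul_zeta_apply, ArithmeticFunction.moebius_mul_coe_zeta,
    ArithmeticFunction.one_apply]

theorem abs_sum_moebius_Icc_dvd_le (M : ℕ) {j : ℕ} (hj : j ≠ 0) :
    |∑ k ∈ Icc 1 M with k ∣ j, μ k| ≤ j := by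
  have hsub : {k ∈ Icc 1 M | k ∣ j} ⊆ j.divisors := fun k hk =>
    Nat.mem_divisors.mpr ⟨(mem_filter.mp hk).2, hj⟩
  calc |∑ k ∈ Icc 1 M with k ∣ j, μ k| ≤ ∑ k ∈ Icc 1 M with k ∣ j, |μ k| :=
        abs_sum_le_sum_abs _ _
    _ ≤ ∑ k ∈ Icc 1 M with k ∣ j, 1 := sum_le_sum fun _ _ => ArithmeticFunction.abs_moebius_le_one
    _ ≤ #j.divisors := by
        rw [sum_const, nsmul_one]; exact_mod_cast card_le_card hsub
    _ ≤ j := by exact_mod_cast Nat.card_divisors_le_self j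

theorem norm_le_of_hasSum_mul_pow {𝕜 : Type*} [NormedField 𝕜] {d : ℕ → 𝕜} {w s : 𝕜} {r : ℝ}
    {M : ℕ} (h : HasSum (fun j => d j * w ^ j) s) (hw : ‖w‖ ≤ r) (hr : r < 1)
    (hd₀ : ∀ j ≤ M, d j = 0) (hd₁ : ∀ j > M, ‖d j‖ ≤ 1) :
    ‖s‖ ≤ r ^ (M + 1) / (1 - r) := by
  have hr₀ : 0 ≤ r := (norm_nonneg w).trans hw
  rw [← hasSum_nat_add_iff' (M + 1),
    sum_eq_zero fun j hj => by rw [hd₀ j (Nat.lt_succ_iff.mp (mem_range.mp hj)), zero_mul],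
    sub_zero] at h
  rw [div_eq_mul_inv]
  refine h.norm_le_of_bounded ((hasSum_geometric_of_lt_one hr₀ hr).mul_left _) fun j => ?_
  calc ‖d (j + (M + 1)) * w ^ (j + (M + 1))‖ = ‖d (j + (M + 1))‖ * ‖w‖ ^ (j + (M + 1)) := by
        rw [norm_mul, norm_pow]
    _ ≤ 1 * r ^ (j + (M + 1)) := by gcongr; exact hd₁ _ (by omega)
    _ = r ^ (M + 1) * r ^ j := by ring

namespace Complex

theorem norm_log_one_sub_le {w : ℂ} (hw : ‖w‖ < 1) : ‖log (1 - w)‖ ≤ ‖w‖ / (1 - ‖w‖) := by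
  have h := norm_log_one_add_le (z := -w) (by rwa [norm_neg])
  rw [← sub_eq_add_neg, norm_neg] at h
  refine h.trans (le_of_sub_nonneg ?_)
  have h1 : 0 < 1 - ‖w‖ := sub_pos.mpr hw
  field_simp
  nlinarith [norm_nonneg w]

theorem norm_log_one_sub_pow_le {z : ℂ} {r : ℝ} (hz : ‖z‖ ≤ r) (hr : r < 1) {k : ℕ}
    (hk : k ≠ 0) : ‖log (1 - z ^ k)‖ ≤ r ^ k / (1 - r) := by
  have hzk : ‖z ^ k‖ ≤ ‖z‖ := by
    rw [norm_pow]; exact pow_le_of_le_one (norm_nonneg z) (hz.trans hr.le) hk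
  have hzk' : ‖z ^ k‖ ≤ r ^ k := by rw [norm_pow]; gcongr
  calc ‖log (1 - z ^ k)‖ ≤ ‖z ^ k‖ / (1 - ‖z ^ k‖) :=
        norm_log_one_sub_le (hzk.trans_lt (hz.trans_lt hr))
    _ ≤ r ^ k / (1 - r) :=
        div_le_div₀ ((norm_nonneg _).trans hzk') hzk' (by linarith) (by linarith)

-- At `j = 0` the coefficient is `k / 0 = 0`.
theorem hasSum_neg_log_one_sub_pow {w : ℂ} (hw : ‖w‖ < 1) {k : ℕ} (hk : k ≠ 0) :
    HasSum (fun j : ℕ => (if k ∣ j then (k : ℂ) / j else 0) * w ^ j) (-log (1 - w ^ k)) := by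
  have hwk : ‖w ^ k‖ < 1 := by rw [norm_pow]; exact pow_lt_one₀ (norm_nonneg w) hw hk
  have hinj : Function.Injective (k * ·) := fun a b h =>
    Nat.eq_of_mul_eq_mul_left (Nat.pos_of_ne_zero hk) h
  rw [← hinj.hasSum_iff fun j hj => by rw [if_neg fun ⟨m, hm⟩ => hj ⟨m, hm.symm⟩, zero_mul]]
  convert hasSum_taylorSeries_neg_log hwk using 2 with n
  rw [Function.comp_apply, if_pos (dvd_mul_right k n), pow_mul, Nat.cast_mul]
  rcases eq_or_ne n 0 with rfl | hn
  · simp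
  · field_simp

theorem hasSum_sum_moebius_mul_log {w : ℂ} (hw : ‖w‖ < 1) (M : ℕ) :
    HasSum (fun j : ℕ => (∑ k ∈ Icc 1 M with k ∣ j, (μ k : ℂ)) / j * w ^ j)
      (-∑ k ∈ Icc 1 M, (μ k / k : ℂ) * log (1 - w ^ k)) := by
  have h := hasSum_sum (s := Icc 1 M) fun k hk =>
    (hasSum_neg_log_one_sub_pow hw (by grind : k ≠ 0)).mul_left ((μ k : ℂ) / k)
  rw [← sum_neg_distrib]
  simp only [← mul_neg]
  refine h.congr_fun fun j => ?_
  rw [sum_filter, sum_div, sum_mul]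
  refine sum_congr rfl fun k hk => ?_
  have hk : (k : ℂ) ≠ 0 := by norm_cast; grind
  split_ifs
  · field_simp
  · simp

theorem norm_add_sum_moebius_mul_log_le {w : ℂ} {r : ℝ} (hw : ‖w‖ ≤ r) (hr : r < 1) {M : ℕ}
    (hM : M ≠ 0) :
    ‖w + ∑ k ∈ Icc 1 M, (μ k / k : ℂ) * log (1 - w ^ k)‖ ≤ r ^ (M + 1) / (1 - r) := by
  -- The coefficient of `w ^ j` is `[j = 1] - (∑ k ≤ M, k ∣ j, μ k) / j`, which vanishes
  -- for `j ≤ M` by Möbius inversion and has norm at most `1` for `j > M`.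
  have hone : HasSum (fun j : ℕ => (if j = 1 then 1 else 0 : ℂ) * w ^ j) w := by
    convert hasSum_ite_eq 1 w using 2 with j
    split_ifs with h <;> simp [h]
  have h := hone.sub (hasSum_sum_moebius_mul_log (hw.trans_lt hr) M)
  rw [sub_neg_eq_add] at h
  refine norm_le_of_hasSum_mul_pow
    (d := fun j => (if j = 1 then 1 else 0) - (∑ k ∈ Icc 1 M with k ∣ j, (μ k : ℂ)) / j)
    (h.congr_fun fun j => sub_mul _ _ _) hw hr
    (fun j hjM => ?_) (fun j hjM => ?_)
  · rcases eq_or_ne j 0 with rfl | hj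
    · simp
    · rw [← Int.cast_sum, sum_moebius_Icc_dvd_of_le hj hjM]
      split_ifs with h1 <;> simp [h1]
  · have hj : j ≠ 0 := by omega
    rw [if_neg (by omega : j ≠ 1), zero_sub, norm_neg, norm_div, ← Int.cast_sum, norm_intCast,
      Complex.norm_natCast, div_le_one (by positivity)]
    exact_mod_cast abs_sum_moebius_Icc_dvd_le M hj

end Complex

def gClosure (K : Set ℂ) : Submodule ℂ (ℂ → ℂ) :=
  (Submodule.span ℂ (gFun '' Set.Ici 2)).uniformClosureOn K

section gClosure

variable {K : Set ℂ} {r : ℝ}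

theorem gFun_mem_gClosure {k : ℕ} (hk : k ≠ 0) : gFun k ∈ gClosure K := by
  rcases eq_or_ne k 1 with rfl | hk1
  · have : gFun 1 = 0 := by funext z; simp [gFun]
    exact this ▸ zero_mem _
  · exact Submodule.le_uniformClosureOn
      (Submodule.subset_span ⟨k, Set.mem_Ici.mpr (by omega), rfl⟩)

theorem const_mem_gClosure (hK : K ⊆ closedBall 0 r) (hr : r < 1) (a : ℂ) :
    (fun _ => a) ∈ gClosure K := by
  suffices h1 : (fun _ => (1 : ℂ)) ∈ gClosure K by
    have h : (a • fun _ : ℂ => (1 : ℂ)) = fun _ => a := by funext; simp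
    exact h ▸ (gClosure K).smul_mem a h1
  have hlog : Tendsto (fun k : ℕ => Real.log k) atTop atTop :=
    Real.tendsto_log_atTop.comp tendsto_natCast_atTop_atTop
  refine Submodule.mem_uniformClosureOn_of_tendstoUniformlyOn
    (l := atTop) (F := fun k : ℕ => (-(Real.log k : ℂ)⁻¹) • gFun k) ?_
    (tendstoUniformlyOn_of_norm_sub_le (b := fun k => 2 / (1 - r) * (Real.log k)⁻¹) ?_ ?_)
  · filter_upwards [eventually_ne_atTop 0] with k hk
    exact (gClosure K).smul_mem _ (gFun_mem_gClosure hk)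
  · simpa using hlog.inv_tendsto_atTop.const_mul (2 / (1 - r))
  · filter_upwards [hlog.eventually_gt_atTop 0] with k hk z hz
    have hz : ‖z‖ ≤ r := by simpa using hK hz
    have hk0 : k ≠ 0 := by rintro rfl; simp at hk
    have hlogC : (Real.log k : ℂ) ≠ 0 := by exact_mod_cast hk.ne'
    have hbound : ∀ j ≠ 0, ‖log (1 - z ^ j)‖ ≤ 1 / (1 - r) := fun j hj =>
      (norm_log_one_sub_pow_le hz hr hj).trans (by
        gcongr; exact pow_le_one₀ ((norm_nonneg z).trans hz) hr.le)
    calc ‖1 - (-(Real.log k : ℂ)⁻¹ • gFun k) z‖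
        = ‖(log (1 - z ^ k) - log (1 - z ^ 1)) * ((Real.log k)⁻¹ : ℝ)‖ := by
          rw [Pi.smul_apply, smul_eq_mul, gFun, pow_one, ofReal_inv]
          congr 1
          field_simp
          ring
      _ = ‖log (1 - z ^ k) - log (1 - z ^ 1)‖ * (Real.log k)⁻¹ := by
          rw [norm_mul, norm_real, Real.norm_of_nonneg (inv_nonneg.mpr hk.le)]
      _ ≤ (1 / (1 - r) + 1 / (1 - r)) * (Real.log k)⁻¹ := by
          gcongr
          exact (norm_sub_le _ _).trans (add_le_add (hbound k hk0) (hbound 1 one_ne_zero))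
      _ = 2 / (1 - r) * (Real.log k)⁻¹ := by ring

theorem log_one_sub_mem_gClosure (hK : K ⊆ closedBall 0 r) (hr₀ : 0 ≤ r) (hr : r < 1) :
    (fun z => log (1 - z)) ∈ gClosure K := by
  refine Submodule.mem_uniformClosureOn_of_tendstoUniformlyOn
    (l := atTop) (F := fun j : ℕ => -gFun j - fun _ => (Real.log j : ℂ)) ?_
    (tendstoUniformlyOn_of_norm_sub_le (b := fun j => r ^ j / (1 - r)) ?_ ?_)
  · filter_upwards [eventually_ne_atTop 0] with j hj
    exact sub_mem (neg_mem (gFun_mem_gClosure hj)) (const_mem_gClosure hK hr _)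
  · simpa using (tendsto_pow_atTop_nhds_zero_of_lt_one hr₀ hr).div_const (1 - r)
  · filter_upwards [eventually_ne_atTop 0] with j hj z hz
    have h : log (1 - z) - (-gFun j - (fun _ => (Real.log j : ℂ) : ℂ → ℂ)) z
        = log (1 - z ^ j) := by
      simp only [Pi.sub_apply, Pi.neg_apply, gFun]
      ring
    exact h ▸ norm_log_one_sub_pow_le (by simpa using hK hz) hr hj

theorem log_one_sub_pow_mem_gClosure (hK : K ⊆ closedBall 0 r) (hr₀ : 0 ≤ r) (hr : r < 1)
    {j : ℕ} (hj : j ≠ 0) : (fun z => log (1 - z ^ j)) ∈ gClosure K := by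
  have h : (fun z => log (1 - z ^ j))
      = gFun j + (fun z => log (1 - z)) + fun _ => (Real.log j : ℂ) := by
    funext z
    simp only [Pi.add_apply, gFun]
    ring
  exact h ▸ add_mem (add_mem (gFun_mem_gClosure hj) (log_one_sub_mem_gClosure hK hr₀ hr))
    (const_mem_gClosure hK hr _)

theorem pow_mem_gClosure (hK : K ⊆ closedBall 0 r) (hr₀ : 0 ≤ r) (hr : r < 1) (n : ℕ) :
    (fun z => z ^ n) ∈ gClosure K := by
  rcases eq_or_ne n 0 with rfl | hn
  · simpa using const_mem_gClosure hK hr 1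
  refine Submodule.mem_uniformClosureOn_of_tendstoUniformlyOn
    (l := atTop)
    (F := fun M : ℕ => -∑ k ∈ Icc 1 M, ((μ k : ℂ) / k) • fun z => log (1 - z ^ (n * k))) ?_
    (tendstoUniformlyOn_of_norm_sub_le (b := fun M => r ^ (M + 1) / (1 - r)) ?_ ?_)
  · refine Eventually.of_forall fun M => neg_mem (sum_mem fun k hk => ?_)
    exact Submodule.smul_mem _ _
      (log_one_sub_pow_mem_gClosure hK hr₀ hr (mul_ne_zero hn (by grind)))
  · simpa using ((tendsto_pow_atTop_nhds_zero_of_lt_one hr₀ hr).comp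
      (tendsto_add_atTop_nat 1)).div_const (1 - r)
  · filter_upwards [eventually_ne_atTop 0] with M hM z hz
    have hz : ‖z‖ ≤ r := by simpa using hK hz
    have hzn : ‖z ^ n‖ ≤ r := by
      rw [norm_pow]; exact (pow_le_of_le_one (norm_nonneg z) (hz.trans hr.le) hn).trans hz
    simpa [Finset.sum_apply, pow_mul] using norm_add_sum_moebius_mul_log_le hzn hr hM

theorem mem_gClosure_of_differentiableOn (hK : K ⊆ closedBall 0 r) (hr₀ : 0 ≤ r) (hr : r < 1)
    {G : ℂ → ℂ} (hG : DifferentiableOn ℂ G (ball 0 1)) : G ∈ gClosure K := by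
  obtain ⟨R, hR⟩ : ∃ R : NNReal, (R : ℝ) = (r + 2) / 3 := ⟨⟨_, by positivity⟩, rfl⟩
  obtain ⟨ρ, hρ⟩ : ∃ ρ : NNReal, (ρ : ℝ) = (2 * r + 1) / 3 := ⟨⟨_, by positivity⟩, rfl⟩
  have hp := (hG.mono (closedBall_subset_ball (show (R : ℝ) < 1 by linarith))
    ).hasFPowerSeriesOnBall (NNReal.coe_pos.mp (by rw [hR]; positivity))
  have hρR : (ρ : ENNReal) < R := by
    rw [ENNReal.coe_lt_coe, ← NNReal.coe_lt_coe]; linarith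
  refine Submodule.mem_uniformClosureOn_of_tendstoUniformlyOn ?_
    ((hp.tendstoUniformlyOn' hρR).mono (hK.trans (closedBall_subset_ball ?_)))
  · refine Eventually.of_forall fun n => ?_
    have h : (fun y => (cauchyPowerSeries G 0 R).partialSum n (y - 0))
        = ∑ i ∈ range n, (cauchyPowerSeries G 0 R).coeff i • fun y => y ^ i := by
      funext y
      simp [FormalMultilinearSeries.partialSum, Finset.sum_apply, mul_comm]
    exact h ▸ sum_mem fun i _ => Submodule.smul_mem _ _ (pow_mem_gClosure hK hr₀ hr i)
  · linarith

end gClosure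

theorem sub_sum_mul_hFun_eq {z : ℂ} (hz : z ≠ 1) (w : ℂ) (c : ℕ → ℂ) (s : Finset ℕ) :
    w - ∑ k ∈ s, c k * hFun k z = ((1 - z) * w - ∑ k ∈ s, c k * gFun k z) / (1 - z) := by
  have h1z : (1 : ℂ) - z ≠ 0 := sub_ne_zero.mpr hz.symm
  simp only [hFun, mul_div_assoc', ← sum_div]
  field_simp

/-- The span of `{h_k : k ≥ 2}` is dense in the space of holomorphic functions
on the unit disk `𝔻` with the compact-open topology: every holomorphic `F` can be approximated
uniformly on each compact `K ⊆ 𝔻` by finite linear combinations of the `h_k`. -/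
theorem span_hk_dense_holomorphic
    (F : ℂ → ℂ) (hF : DifferentiableOn ℂ F (Metric.ball (0 : ℂ) 1))
    (K : Set ℂ) (hK : IsCompact K) (hKD : K ⊆ Metric.ball (0 : ℂ) 1)
    (ε : ℝ) (hε : 0 < ε) :
    ∃ (n : ℕ), 2 ≤ n ∧ ∃ c : ℕ → ℂ,
      ∀ z ∈ K, ‖F z - ∑ k ∈ Finset.Icc 2 n, c k * hFun k z‖ < ε := by
  obtain ⟨r, ⟨hr₀, hr⟩, hKr⟩ := exists_pos_lt_subset_ball one_pos hK.isClosed hKD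
  have hG : (fun z => (1 - z) * F z) ∈ gClosure K :=
    mem_gClosure_of_differentiableOn (hKr.trans ball_subset_closedBall) hr₀.le hr
      (((differentiableOn_const 1).sub differentiableOn_id).mul hF)
  obtain ⟨g, hg, hGg⟩ := hG (ε * (1 - r)) (mul_pos hε (sub_pos.mpr hr))
  obtain ⟨n, hn, c, rfl⟩ := Submodule.exists_sum_Icc_eq_of_mem_span_image_Ici hg
  refine ⟨n, hn, c, fun z hz => ?_⟩
  have hzr : ‖z‖ < r := by simpa using hKr hz
  have h1z : 1 - r ≤ ‖1 - z‖ := by linarith [norm_sub_norm_le (1 : ℂ) z, norm_one (α := ℂ)]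
  rw [sub_sum_mul_hFun_eq (by rintro rfl; simp at hzr; linarith), norm_div]
  calc _ ≤ ‖(1 - z) * F z - ∑ k ∈ Icc 2 n, c k * gFun k z‖ / (1 - r) := by
        gcongr
    _ < ε * (1 - r) / (1 - r) := by
        gcongr; simpa [Finset.sum_apply] using hGg z hz
    _ = ε := by field_simp [(sub_pos.mpr hr).ne']
end
end

section
/- Fix an integer k ≥ 2. If E is a closed subspace of the Hardy space H² that contains h_k and is invariant under the shift operator S (where (Sf)(ω) = ω·f(ω)), then E = H²; equivalently, each h_k is a cyclic vector for the shift on H² (h_k is outer). -/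
open MeasureTheory Complex

noncomputable section

/-- Normalized Lebesgue (arc-length) measure on the unit circle, as a measure on `ℂ`. -/
def mCirc : Measure ℂ :=
  (ENNReal.ofReal (2 * Real.pi))⁻¹ •
    Measure.map (fun θ : ℝ => Complex.exp (θ * Complex.I))
      (volume.restrict (Set.Ioc 0 (2 * Real.pi)))

/-- The Hardy space `H²`, viewed as the set of elements of `L²(𝕋, m)` whose negative
Fourier coefficients vanish. -/
def H2 : Set (Lp ℂ 2 mCirc) :=
  {f | ∀ n : ℤ, n < 0 → (∫ ω : ℂ, f ω * ω ^ (-n) ∂mCirc) = 0}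

end

/-!
On the closed disc, away from the `k`-th roots of unity, `|h_k|` is bounded below, so
`U = 1 / h_k` is a bounded holomorphic function on the disc that is continuous at almost every
point of the circle. Polynomial approximations `q` of the dilations `z ↦ U (ρ z)`, `ρ ↑ 1`, give
elements `q h_k` of `E` that converge to `U h_k = 1` pointwise and dominatedly, hence in `L²`; so
`1 ∈ E` and with it every monomial. An element of `H²` orthogonal to all monomials has vanishing
Fourier coefficients, so the orthogonal projection onto `E` fixes `H²`.
-/

open Topology Filter Metric Polynomial
open scoped ENNReal NNReal InnerProductSpace

namespace MeasureTheory

variable {α β : Type*} [MeasurableSpace α] {μ : Measure α} [NormedAddCommGroup β] {p : ℝ≥0∞}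

theorem unifIntegrable_of_dominated {ι : Type*} (hp : 1 ≤ p) (hp' : p ≠ ∞) {f : ι → α → β}
    {G : α → ℝ} (hG : MemLp G p μ) (hfG : ∀ i, ∀ᵐ x ∂μ, ‖f i x‖ ≤ G x) :
    UnifIntegrable f p μ := by
  intro ε hε
  obtain ⟨δ, hδ, hGδ⟩ := unifIntegrable_const (ι := Unit) hp hp' hG hε
  refine ⟨δ, hδ, fun i s hs hμs => (eLpNorm_mono_ae_real ?_).trans (hGδ () s hs hμs)⟩
  filter_upwards [hfG i] with x hx
  by_cases hxs : x ∈ s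
  · simpa [hxs] using hx
  · simp [hxs]

theorem Lp.mem_of_dominated_of_ae_tendsto [IsFiniteMeasure μ] [Fact (1 ≤ p)] (hp : p ≠ ∞)
    {S : Set (Lp β p μ)} (hS : IsClosed S) {e : ℕ → Lp β p μ} (he : ∀ n, e n ∈ S)
    {G : α → ℝ} (hG : MemLp G p μ) (heG : ∀ n, ∀ᵐ x ∂μ, ‖e n x‖ ≤ G x) {f : Lp β p μ}
    (hef : ∀ᵐ x ∂μ, Tendsto (fun n => e n x) atTop (𝓝 (f x))) : f ∈ S := by
  refine hS.mem_of_tendsto (b := atTop) ((Lp.tendsto_Lp_iff_tendsto_eLpNorm' e f).mpr ?_)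
    (.of_forall he)
  exact tendsto_Lp_finite_of_tendsto_ae Fact.out hp (fun n => (Lp.aestronglyMeasurable (e n)))
    (Lp.memLp f) (unifIntegrable_of_dominated Fact.out hp hG heG) hef

end MeasureTheory

theorem exists_polynomial_norm_sub_lt_of_differentiableOn {f : ℂ → ℂ} {r : ℝ≥0} {R : ℝ}
    (hf : DifferentiableOn ℂ f (ball 0 R)) (hr : r < R) {ε : ℝ} (hε : 0 < ε) :
    ∃ q : ℂ[X], ∀ z ∈ closedBall (0 : ℂ) r, ‖q.eval z - f z‖ < ε := by
  obtain ⟨R', hrR', hR'R⟩ := exists_between hr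
  obtain ⟨s, hrs, hsR'⟩ := exists_between hrR'
  lift s to ℝ≥0 using r.2.trans hrs.le
  lift R' to ℝ≥0 using r.2.trans hrR'.le
  have hps := (hf.mono (closedBall_subset_ball hR'R)).hasFPowerSeriesOnBall
    (r.2.trans_lt hrR')
  obtain ⟨N, hN⟩ := (tendstoUniformlyOn_iff.mp (hps.tendstoUniformlyOn (r' := s) (by
    exact_mod_cast hsR')) ε hε).exists
  refine ⟨∑ i ∈ Finset.range N, C ((cauchyPowerSeries f 0 R').coeff i) * X ^ i, fun z hz => ?_⟩
  have hzs : z ∈ ball (0 : ℂ) s := closedBall_subset_ball hrs hz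
  rw [norm_sub_rev, ← dist_eq_norm]
  convert hN z hzs using 2
  · simp
  · simp only [FormalMultilinearSeries.partialSum, eval_finsetSum, eval_mul, eval_C, eval_pow,
      eval_X, FormalMultilinearSeries.apply_eq_pow_smul_coeff, smul_eq_mul, mul_comm]

theorem ofReal_mul_mem_ball_one {ρ : ℝ} (hρ : 0 < ρ) {z : ℂ} (hz : z ∈ ball (0 : ℂ) ρ⁻¹) :
    (ρ : ℂ) * z ∈ ball 0 1 := by
  rw [mem_ball_zero_iff] at hz ⊢
  rw [norm_mul, Complex.norm_real, Real.norm_of_nonneg hρ.le]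
  calc ρ * ‖z‖ < ρ * ρ⁻¹ := by gcongr
    _ = 1 := mul_inv_cancel₀ hρ.ne'

theorem exists_polynomial_norm_sub_lt_dilation {U : ℂ → ℂ} (hU : DifferentiableOn ℂ U (ball 0 1))
    {ρ : ℝ} (hρ : ρ ∈ Set.Ioo 0 1) {ε : ℝ} (hε : 0 < ε) :
    ∃ q : ℂ[X], ∀ z ∈ closedBall (0 : ℂ) 1, ‖q.eval z - U (ρ * z)‖ < ε :=
  exists_polynomial_norm_sub_lt_of_differentiableOn (r := 1) (R := ρ⁻¹)
    (hU.comp (by fun_prop) fun _ hz => ofReal_mul_mem_ball_one hρ.1 hz)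
    (by exact_mod_cast one_lt_inv_iff₀.mpr hρ) hε

local instance : Fact (0 < 2 * Real.pi) := ⟨Real.two_pi_pos⟩

noncomputable def circleCoe (x : AddCircle (2 * Real.pi)) : ℂ := AddCircle.toCircle x

theorem circleCoe_coe (θ : ℝ) : circleCoe θ = Complex.exp (θ * Complex.I) := by
  rw [circleCoe, AddCircle.toCircle_apply_mk, div_self Real.two_pi_pos.ne', one_mul,
    Circle.coe_exp]

theorem continuous_circleCoe : Continuous circleCoe :=
  continuous_subtype_val.comp AddCircle.continuous_toCircle

theorem measurePreserving_circleCoe :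
    MeasurePreserving circleCoe AddCircle.haarAddCircle mCirc := by
  refine ⟨continuous_circleCoe.measurable, ?_⟩
  have hexp : (fun θ : ℝ => Complex.exp (θ * Complex.I)) =
      circleCoe ∘ ((↑) : ℝ → AddCircle (2 * Real.pi)) := by
    funext θ; exact (circleCoe_coe θ).symm
  have hmk := (AddCircle.measurePreserving_mk (2 * Real.pi) 0).map_eq
  rw [zero_add] at hmk
  rw [mCirc, hexp, ← Measure.map_map continuous_circleCoe.measurable AddCircle.measurable_mk',
    hmk, AddCircle.volume_eq_smul_haarAddCircle, Measure.map_smul, smul_smul,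
    ENNReal.inv_mul_cancel (by simp [Real.pi_pos]) ENNReal.ofReal_ne_top, one_smul]

instance : IsProbabilityMeasure mCirc := by
  rw [← measurePreserving_circleCoe.map_eq]
  exact Measure.isProbabilityMeasure_map continuous_circleCoe.measurable.aemeasurable

theorem ae_norm_eq_one : ∀ᵐ ω ∂mCirc, ‖ω‖ = 1 := by
  rw [← measurePreserving_circleCoe.map_eq, ae_map_iff continuous_circleCoe.measurable.aemeasurable
    (measurableSet_eq_fun measurable_norm measurable_const)]
  exact .of_forall fun x => Circle.norm_coe _

theorem ae_pow_ne_one {k : ℕ} (hk : k ≠ 0) : ∀ᵐ ω ∂mCirc, ω ^ k ≠ 1 := by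
  have hmeas : MeasurableSet {ω : ℂ | ω ^ k ≠ 1} :=
    (measurableSet_eq_fun (measurable_id.pow_const k) measurable_const).compl
  rw [mCirc, Measure.ae_ennreal_smul_measure_iff (by simp [ENNReal.mul_eq_top]),
    ae_map_iff (by fun_prop) hmeas]
  refine ae_restrict_of_ae (measure_mono_null (fun θ hθ => ?_)
    ((Set.countable_range fun n : ℤ => n * (2 * Real.pi) / k).measure_zero volume))
  obtain ⟨n, hn⟩ := Complex.exp_eq_one_iff.mp
    (by simpa [← Complex.exp_nat_mul] using hθ : Complex.exp (k * (θ * Complex.I)) = 1)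
  refine ⟨n, ?_⟩
  have hkθ : (k * θ : ℂ) = n * (2 * Real.pi) := by
    apply mul_right_cancel₀ Complex.I_ne_zero
    linear_combination hn
  have hkθ' : (k * θ : ℝ) = n * (2 * Real.pi) := by exact_mod_cast hkθ
  field_simp
  linarith

theorem memLp_zpow (n : ℤ) : MemLp (fun ω : ℂ => ω ^ n) 2 mCirc :=
  MemLp.of_bound (by fun_prop : Measurable fun ω : ℂ => ω ^ n).aestronglyMeasurable 1 (by
    filter_upwards [ae_norm_eq_one] with ω hω
    simp [norm_zpow, hω])

noncomputable def zpowLp (n : ℤ) : Lp ℂ 2 mCirc := (memLp_zpow n).toLp _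

theorem coeFn_zpowLp (n : ℤ) : zpowLp n =ᵐ[mCirc] fun ω => ω ^ n :=
  (memLp_zpow n).coeFn_toLp

theorem inner_zpowLp (n : ℤ) (f : Lp ℂ 2 mCirc) :
    ⟪zpowLp n, f⟫_ℂ = ∫ ω, f ω * ω ^ (-n) ∂mCirc := by
  rw [L2.inner_def]
  refine integral_congr_ae ?_
  filter_upwards [coeFn_zpowLp n, ae_norm_eq_one] with ω hn h1
  rw [hn, RCLike.inner_apply, map_zpow₀, ← Complex.inv_eq_conj h1, inv_zpow', mul_comm]

theorem mem_H2_iff {f : Lp ℂ 2 mCirc} : f ∈ H2 ↔ ∀ n < 0, ⟪zpowLp n, f⟫_ℂ = 0 := by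
  simp only [H2, Set.mem_ofPred_eq, inner_zpowLp]

theorem eq_zero_of_forall_inner_zpowLp_eq_zero {f : Lp ℂ 2 mCirc}
    (hf : ∀ n, ⟪zpowLp n, f⟫_ℂ = 0) : f = 0 := by
  let V := Lp.compMeasurePreservingₗᵢ (p := 2) (E := ℂ) ℂ circleCoe measurePreserving_circleCoe
  have hV : ∀ n, V (zpowLp n) = fourierLp 2 n := by
    intro n
    refine Lp.ext ((Lp.coeFn_compMeasurePreserving _ _).trans ?_)
    refine (measurePreserving_circleCoe.quasiMeasurePreserving.ae_eq_comp
      (coeFn_zpowLp n)).trans ?_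
    have hpow : (fun ω : ℂ => ω ^ n) ∘ circleCoe = fourier n := by
      funext x
      simp [fourier_apply, AddCircle.toCircle_zsmul, circleCoe]
    rw [hpow]
    exact (coeFn_fourierLp 2 n).symm
  have hVf : V f = 0 := by
    refine fourierBasis.repr.injective ?_
    ext n
    rw [HilbertBasis.repr_apply_apply, coe_fourierBasis, ← hV, LinearIsometry.inner_map_map, hf]
    simp
  exact V.injective (hVf.trans (map_zero V).symm)

def IsShiftInvariant (E : Submodule ℂ (Lp ℂ 2 mCirc)) : Prop :=
  ∀ f ∈ E, ∀ g : Lp ℂ 2 mCirc, (g : ℂ → ℂ) =ᵐ[mCirc] (fun ω => ω * f ω) → g ∈ E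

theorem memLp_id_mul (f : Lp ℂ 2 mCirc) : MemLp (fun ω : ℂ => ω * f ω) 2 mCirc :=
  (Lp.memLp f).of_le (measurable_id.aestronglyMeasurable.mul (Lp.aestronglyMeasurable f)) (by
    filter_upwards [ae_norm_eq_one] with ω hω
    simp [hω])

namespace IsShiftInvariant

variable {E : Submodule ℂ (Lp ℂ 2 mCirc)} (hE : IsShiftInvariant E)
include hE

theorem exists_mem_ae_eq_pow_mul {f : Lp ℂ 2 mCirc} (hf : f ∈ E) (n : ℕ) :
    ∃ e ∈ E, e =ᵐ[mCirc] fun ω => ω ^ n * f ω := by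
  induction n with
  | zero => exact ⟨f, hf, .of_forall fun ω => by simp⟩
  | succ n ih =>
    obtain ⟨e, he, hef⟩ := ih
    refine ⟨_, hE e he _ (memLp_id_mul e).coeFn_toLp, ?_⟩
    filter_upwards [(memLp_id_mul e).coeFn_toLp, hef] with ω h1 h2
    rw [h1, h2, pow_succ]
    ring

theorem exists_mem_ae_eq_eval_mul {f : Lp ℂ 2 mCirc} (hf : f ∈ E) (q : ℂ[X]) :
    ∃ e ∈ E, e =ᵐ[mCirc] fun ω => q.eval ω * f ω := by
  induction q using Polynomial.induction_on' with
  | add q₁ q₂ h₁ h₂ =>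
    obtain ⟨e₁, he₁, hef₁⟩ := h₁
    obtain ⟨e₂, he₂, hef₂⟩ := h₂
    refine ⟨e₁ + e₂, E.add_mem he₁ he₂, ?_⟩
    filter_upwards [Lp.coeFn_add e₁ e₂, hef₁, hef₂] with ω h h₁ h₂
    rw [h, Pi.add_apply, h₁, h₂, eval_add, add_mul]
  | monomial n a =>
    obtain ⟨e, he, hef⟩ := hE.exists_mem_ae_eq_pow_mul hf n
    refine ⟨a • e, E.smul_mem a he, ?_⟩
    filter_upwards [Lp.coeFn_smul a e, hef] with ω h h'
    rw [h, Pi.smul_apply, h', eval_monomial, smul_eq_mul, mul_assoc]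

theorem eq_H2_of_const_one_mem (hE_closed : IsClosed (E : Set (Lp ℂ 2 mCirc)))
    (hE_sub : (E : Set (Lp ℂ 2 mCirc)) ⊆ H2) (hone : Lp.const 2 mCirc (1 : ℂ) ∈ E) :
    (E : Set (Lp ℂ 2 mCirc)) = H2 := by
  have hzpow : ∀ n : ℕ, zpowLp n ∈ E := by
    intro n
    obtain ⟨e, he, hen⟩ := hE.exists_mem_ae_eq_pow_mul hone n
    convert he using 1
    refine Lp.ext ((coeFn_zpowLp n).trans ?_)
    filter_upwards [hen] with ω h
    simp [h]
  refine hE_sub.antisymm fun f hf => ?_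
  have : CompleteSpace E := hE_closed.completeSpace_coe
  have hPf := E.starProjection_apply_mem f
  suffices f - E.starProjection f = 0 by rwa [sub_eq_zero.mp this]
  refine eq_zero_of_forall_inner_zpowLp_eq_zero fun n => ?_
  rcases lt_or_ge n 0 with hn | hn
  · rw [inner_sub_right, mem_H2_iff.mp hf n hn, mem_H2_iff.mp (hE_sub hPf) n hn, sub_zero]
  · lift n to ℕ using hn
    exact Submodule.inner_right_of_mem_orthogonal (hzpow n) (E.sub_starProjection_mem_orthogonal f)

theorem const_one_mem_of_bounded_inverse (hE_closed : IsClosed (E : Set (Lp ℂ 2 mCirc)))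
    {h : Lp ℂ 2 mCirc} (hh : h ∈ E) {U : ℂ → ℂ} {M : ℝ} (hU : DifferentiableOn ℂ U (ball 0 1))
    (hUM : ∀ z ∈ ball (0 : ℂ) 1, ‖U z‖ ≤ M)
    (hUh : ∀ᵐ ω ∂mCirc, Tendsto (fun r : ℝ => U (r * ω) * h ω) (𝓝[<] 1) (𝓝 1)) :
    Lp.const 2 mCirc (1 : ℂ) ∈ E := by
  obtain ⟨ρ, -, hρ01, hρ1⟩ := exists_seq_strictMono_tendsto' (zero_lt_one' ℝ)
  have hρ : Tendsto ρ atTop (𝓝[<] 1) :=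
    tendsto_nhdsWithin_of_tendsto_nhds_of_eventually_within _ hρ1
      (.of_forall fun n => (hρ01 n).2)
  choose q hq using fun n : ℕ =>
    exists_polynomial_norm_sub_lt_dilation hU (hρ01 n) (Nat.one_div_pos_of_nat (n := n))
  choose e he hqe using fun n => hE.exists_mem_ae_eq_eval_mul hh (q n)
  refine Lp.mem_of_dominated_of_ae_tendsto ENNReal.ofNat_ne_top hE_closed he
    ((Lp.memLp h).norm.const_mul (M + 1)) (fun n => ?_) ?_
  · filter_upwards [hqe n, ae_norm_eq_one] with ω hω h1
    have hqU := (hq n ω (by simp [h1])).le.trans (by rw [div_le_one (by positivity)]; simp)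
    rw [hω, norm_mul]
    gcongr
    calc ‖(q n).eval ω‖ ≤ ‖U (ρ n * ω)‖ + ‖(q n).eval ω - U (ρ n * ω)‖ := norm_le_insert' _ _
      _ ≤ M + 1 := add_le_add (hUM _ (ofReal_mul_mem_ball_one (hρ01 n).1
          (by simpa [h1] using one_lt_inv_iff₀.mpr (hρ01 n)))) hqU
  · filter_upwards [ae_all_iff.mpr hqe, hUh, ae_norm_eq_one] with ω hω hUω h1
    have hdiff : Tendsto (fun n => (q n).eval ω - U (ρ n * ω)) atTop (𝓝 0) :=
      squeeze_zero_norm (fun n => (hq n ω (by simp [h1])).le)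
        tendsto_one_div_add_atTop_nhds_zero_nat
    simpa [hω, sub_mul] using (hdiff.mul_const (h ω)).add (hUω.comp hρ)

end IsShiftInvariant

theorem Complex.re_lt_one_of_norm_le_one {z : ℂ} (hz : ‖z‖ ≤ 1) (h1 : z ≠ 1) : z.re < 1 := by
  by_contra! hre
  have hnorm : |z.re| = ‖z‖ :=
    le_antisymm (Complex.abs_re_le_norm z) (hz.trans (hre.trans (le_abs_self _)))
  have him : z.im = 0 := Complex.abs_re_eq_norm.mp hnorm
  exact h1 (Complex.ext (by rw [Complex.one_re]; linarith [le_abs_self z.re]) him)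

theorem Complex.one_sub_mem_slitPlane {z : ℂ} (hz : ‖z‖ ≤ 1) (h1 : z ≠ 1) :
    1 - z ∈ Complex.slitPlane :=
  Complex.mem_slitPlane_iff.mpr (.inl (by simpa using Complex.re_lt_one_of_norm_le_one hz h1))

theorem pow_ne_one_of_norm_lt_one {R : Type*} [NormedRing R] [NormOneClass R] {k : ℕ}
    (hk : k ≠ 0) {z : R} (hz : ‖z‖ < 1) : z ^ k ≠ 1 := by
  intro h
  have := (norm_pow_le' z (Nat.pos_of_ne_zero hk)).trans_lt (pow_lt_one₀ (norm_nonneg z) hz hk)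
  rw [h, norm_one] at this
  exact lt_irrefl _ this

/-- `(k - (1 + z + ⋯ + z^(k-1))) / (1 - z)`, written as a polynomial in `z`; a positive lower
bound for it on the closed disc is what bounds `|h_k|` from below. -/
def geomDefect (k : ℕ) (z : ℂ) : ℂ := ∑ j ∈ Finset.range k, ∑ i ∈ Finset.range j, z ^ i

theorem one_sub_mul_geomDefect (k : ℕ) (z : ℂ) :
    (1 - z) * geomDefect k z = k - ∑ i ∈ Finset.range k, z ^ i := by
  rw [geomDefect, Finset.mul_sum]
  simp only [mul_neg_geom_sum, Finset.sum_sub_distrib, Finset.sum_const, Finset.card_range,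
    nsmul_eq_mul, mul_one]


theorem continuous_geomDefect (k : ℕ) : Continuous (geomDefect k) := by
  unfold geomDefect
  fun_prop

theorem geomDefect_ne_zero {k : ℕ} (hk : 2 ≤ k) {z : ℂ} (hz : ‖z‖ ≤ 1) :
    geomDefect k z ≠ 0 := by
  intro h0
  by_cases h1 : z = 1
  · subst h1
    have hsum : ((∑ j ∈ Finset.range k, j : ℕ) : ℂ) = 0 := by simpa [geomDefect] using h0
    rw [Nat.cast_eq_zero, Finset.sum_eq_zero_iff] at hsum
    exact one_ne_zero (hsum 1 (Finset.mem_range.mpr hk))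
  · have hS : ∑ i ∈ Finset.range k, z ^ i = k := by
      have h := one_sub_mul_geomDefect k z
      rw [h0, mul_zero] at h
      linear_combination h
    have hre : ∑ i ∈ Finset.range k, (z ^ i).re = k := by
      simpa [Complex.re_sum] using congrArg Complex.re hS
    have hlt : ∑ i ∈ Finset.range k, (z ^ i).re < ∑ i ∈ Finset.range k, (1 : ℝ) :=
      Finset.sum_lt_sum
        (fun i _ => (Complex.re_le_norm _).trans (norm_pow z i ▸ pow_le_one₀ (norm_nonneg z) hz))
        ⟨1, Finset.mem_range.mpr hk, by simpa using Complex.re_lt_one_of_norm_le_one hz h1⟩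
    simp [hre] at hlt

theorem exists_pos_le_norm_geomDefect {k : ℕ} (hk : 2 ≤ k) :
    ∃ c > 0, ∀ z : ℂ, ‖z‖ ≤ 1 → c ≤ ‖geomDefect k z‖ := by
  obtain ⟨z₀, hz₀, hmin⟩ := (isCompact_closedBall (0 : ℂ) 1).exists_isMinOn
    (nonempty_closedBall.mpr zero_le_one) (continuous_geomDefect k).norm.continuousOn
  exact ⟨_, norm_pos_iff.mpr (geomDefect_ne_zero hk (mem_closedBall_zero_iff.mp hz₀)),
    fun z hz => hmin (mem_closedBall_zero_iff.mpr hz)⟩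

theorem exp_gFun_sub_one {k : ℕ} (hk : k ≠ 0) {z : ℂ} (hzk : z ^ k ≠ 1) :
    Complex.exp (gFun k z) - 1 = -((1 - z) * geomDefect k z) / k := by
  have h1 : z ≠ 1 := by rintro rfl; exact hzk (one_pow k)
  have hk' : (k : ℂ) ≠ 0 := Nat.cast_ne_zero.mpr hk
  rw [gFun, Complex.exp_sub, Complex.exp_sub, Complex.exp_log (sub_ne_zero.mpr hzk.symm),
    Complex.exp_log (sub_ne_zero.mpr h1.symm), Complex.ofReal_log (Nat.cast_nonneg k),
    Complex.ofReal_natCast, Complex.exp_log hk', one_sub_mul_geomDefect]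
  field_simp [sub_ne_zero.mpr h1.symm]
  linear_combination -mul_neg_geom_sum z k


theorem exists_pos_le_norm_hFun {k : ℕ} (hk : 2 ≤ k) :
    ∃ c > 0, ∀ z : ℂ, ‖z‖ ≤ 1 → z ^ k ≠ 1 → c ≤ ‖hFun k z‖ := by
  obtain ⟨c₀, hc₀, ht⟩ := exists_pos_le_norm_geomDefect hk
  have hk0 : (0 : ℝ) < k := by positivity
  refine ⟨min (c₀ / (2 * k)) (1 / 2), by positivity, fun z hz hzk => ?_⟩
  have h1 : z ≠ 1 := by rintro rfl; exact hzk (one_pow k)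
  have hz1 : 0 < ‖1 - z‖ := norm_pos_iff.mpr (sub_ne_zero.mpr h1.symm)
  have hz2 : ‖1 - z‖ ≤ 2 := (norm_sub_le _ _).trans (by rw [norm_one]; linarith)
  have hexp : ‖Complex.exp (gFun k z) - 1‖ = ‖1 - z‖ * ‖geomDefect k z‖ / k := by
    rw [exp_gFun_sub_one (by omega) hzk, norm_div, norm_neg, norm_mul, Complex.norm_natCast]
  rw [hFun, norm_div, le_div_iff₀ hz1]
  -- for `|g_k z| ≤ 1`, `|exp w - 1| ≤ 2 |w|` passes the bound on `geomDefect` on to `g_k z`;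
  -- otherwise `|g_k z| > 1 ≥ |1 - z| / 2`
  rcases le_or_gt ‖gFun k z‖ 1 with hg | hg
  · have hexp_le := Complex.norm_exp_sub_one_le hg
    rw [hexp, div_le_iff₀ hk0] at hexp_le
    calc min (c₀ / (2 * k)) (1 / 2) * ‖1 - z‖ ≤ c₀ / (2 * k) * ‖1 - z‖ := by
          gcongr
          exact min_le_left _ _
      _ = c₀ * ‖1 - z‖ / (2 * k) := by ring
      _ ≤ ‖gFun k z‖ := by
          rw [div_le_iff₀ (by positivity)]
          nlinarith [mul_le_mul_of_nonneg_left (ht z hz) hz1.le]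
  · calc min (c₀ / (2 * k)) (1 / 2) * ‖1 - z‖ ≤ 1 / 2 * 2 := by
          gcongr
          exact min_le_right _ _
      _ ≤ ‖gFun k z‖ := by linarith

theorem hFun_ne_zero {k : ℕ} (hk : 2 ≤ k) {z : ℂ} (hz : ‖z‖ ≤ 1) (hzk : z ^ k ≠ 1) :
    hFun k z ≠ 0 := by
  obtain ⟨c, hc, hle⟩ := exists_pos_le_norm_hFun hk
  exact norm_pos_iff.mp (hc.trans_le (hle z hz hzk))

theorem differentiableAt_hFun {k : ℕ} {z : ℂ} (hz : ‖z‖ ≤ 1) (hzk : z ^ k ≠ 1) :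
    DifferentiableAt ℂ (hFun k) z := by
  have h1 : z ≠ 1 := by rintro rfl; exact hzk (one_pow k)
  have hzk' : ‖z ^ k‖ ≤ 1 := norm_pow z k ▸ pow_le_one₀ (norm_nonneg z) hz
  have hlog₁ : DifferentiableAt ℂ (fun w : ℂ => Complex.log (1 - w ^ k)) z :=
    ((differentiableAt_const _).sub (differentiableAt_pow k)).clog
      (Complex.one_sub_mem_slitPlane hzk' hzk)
  have hlog₂ : DifferentiableAt ℂ (fun w : ℂ => Complex.log (1 - w)) z :=
    ((differentiableAt_const _).sub differentiableAt_id).clog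
      (Complex.one_sub_mem_slitPlane hz h1)
  exact ((hlog₁.sub hlog₂).sub (differentiableAt_const _)).div
    ((differentiableAt_const _).sub differentiableAt_id) (sub_ne_zero.mpr h1.symm)

theorem differentiableOn_inv_hFun {k : ℕ} (hk : 2 ≤ k) :
    DifferentiableOn ℂ (fun z => (hFun k z)⁻¹) (ball 0 1) := by
  intro z hz
  have hz' := mem_ball_zero_iff.mp hz
  have hzk := pow_ne_one_of_norm_lt_one (by omega : k ≠ 0) hz'
  exact ((differentiableAt_hFun hz'.le hzk).inv
    (hFun_ne_zero hk hz'.le hzk)).differentiableWithinAt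

theorem tendsto_inv_hFun_mul_hFun {k : ℕ} (hk : 2 ≤ k) {ω : ℂ} (hω : ‖ω‖ = 1)
    (hωk : ω ^ k ≠ 1) :
    Tendsto (fun r : ℝ => (hFun k (r * ω))⁻¹ * hFun k ω) (𝓝[<] 1) (𝓝 1) := by
  have hh := hFun_ne_zero hk hω.le hωk
  have hcont : ContinuousAt (fun z => (hFun k z)⁻¹) ω :=
    ((differentiableAt_hFun hω.le hωk).continuousAt).inv₀ hh
  have hrω : Tendsto (fun r : ℝ => (r : ℂ) * ω) (𝓝[<] 1) (𝓝 ω) := by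
    simpa using ((Complex.continuous_ofReal.mul continuous_const).tendsto 1).mono_left
      nhdsWithin_le_nhds (f := fun r : ℝ => (r : ℂ) * ω)
  simpa [inv_mul_cancel₀ hh] using (hcont.tendsto.comp hrω).mul_const (hFun k ω)

/-- Fix `k ≥ 2`.  If `E` is a closed subspace of `H²` containing `h_k` and
invariant under the shift `(Sf)(ω) = ω·f(ω)`, then `E = H²`: each `h_k` is cyclic for the
shift (i.e. `h_k` is outer). -/
theorem shift_invariant_containing_hk_eq_H2 (k : ℕ) (hk2 : 2 ≤ k)
    (hk : Lp ℂ 2 mCirc)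
    (hk_ae : (hk : ℂ → ℂ) =ᵐ[mCirc] hFun k)
    (E : Submodule ℂ (Lp ℂ 2 mCirc))
    (hE_closed : IsClosed (E : Set (Lp ℂ 2 mCirc)))
    (hE_sub : (E : Set (Lp ℂ 2 mCirc)) ⊆ H2)
    (hk_mem : hk ∈ E)
    -- shift invariance: if `g = S f` a.e. with `f ∈ E`, then `g ∈ E`
    (hE_shift : ∀ f ∈ E, ∀ g : Lp ℂ 2 mCirc,
      (g : ℂ → ℂ) =ᵐ[mCirc] (fun ω => ω * f ω) → g ∈ E) :
    (E : Set (Lp ℂ 2 mCirc)) = H2 := by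
  have hE : IsShiftInvariant E := hE_shift
  obtain ⟨c, hc, hle⟩ := exists_pos_le_norm_hFun hk2
  refine hE.eq_H2_of_const_one_mem hE_closed hE_sub
    (hE.const_one_mem_of_bounded_inverse hE_closed hk_mem (differentiableOn_inv_hFun hk2)
      (M := c⁻¹) (fun z hz => ?_) ?_)
  · have hz' := mem_ball_zero_iff.mp hz
    rw [norm_inv]
    exact inv_anti₀ hc (hle z hz'.le (pow_ne_one_of_norm_lt_one (by omega) hz'))
  · filter_upwards [hk_ae, ae_norm_eq_one, ae_pow_ne_one (by omega : k ≠ 0)] with ω hω h1 hωk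
    rw [hω]
    exact tendsto_inv_hFun_mul_hFun hk2 h1 hωk
end
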